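/- Assume h ∘ h ∘ h = 0, g₀(h(Y), Y) = 0, h(h(X₀)) = 0, g₀(h(X₀), X₀) = 0, g₀(h(Y), h(Y)) = 0 and h(Y) ≠ 0. Then g₀(h(X₀), Y) ≠ 0, and for every z ∈ V one has g₀(h(X₀), Y) · h(z) = g₀(h(X₀), z) · h(Y) + g₀(h(Y), z) · h(X₀); in other words, ᵉh = (h(X₀,Y))⁻¹ · (ᵉh(Y) ⊗ (ᵉh(X₀))♭ + ᵉh(X₀) ⊗ (ᵉh(Y))♭). -/
import Mathlib


/-- Decomposition of an index-3 nilpotent electromagnetic potential when `h Y` is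
lightlike and nonzero: `g₀(h X₀, Y) ≠ 0` and
`g₀(h X₀, Y) • h z = g₀(h X₀, z) • h Y + g₀(h Y, z) • h X₀` for every `z`. -/
theorem stmt5 {V : Type*} [AddCommGroup V] [Module ℝ V] [FiniteDimensional ℝ V]
    (g₀ : V →ₗ[ℝ] V →ₗ[ℝ] ℝ) (hg₀symm : ∀ u v : V, g₀ u v = g₀ v u)
    (h : V →ₗ[ℝ] V) (hsymm : ∀ u v : V, g₀ (h u) v = g₀ u (h v))
    (Y X₀ : V) (hYY : g₀ Y Y = -1) (hXX : g₀ X₀ X₀ = -1) (hYX : g₀ Y X₀ = 0)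
    (hpos : ∀ w : V, w ≠ 0 → g₀ w Y = 0 → g₀ w X₀ = 0 → 0 < g₀ w w)
    (hnil : h ∘ₗ (h ∘ₗ h) = 0)
    (hhYY : g₀ (h Y) Y = 0) (hhhX : h (h X₀) = 0) (hhXX : g₀ (h X₀) X₀ = 0)
    (hlight : g₀ (h Y) (h Y) = 0) (hne : h Y ≠ 0) :
    g₀ (h X₀) Y ≠ 0 ∧
    ∀ z : V, g₀ (h X₀) Y • h z = g₀ (h X₀) z • h Y + g₀ (h Y) z • h X₀ := by
  -- from positivity: a vector orthogonal to Y, X₀ and isotropic is zero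
  have kerlem : ∀ w : V, g₀ w Y = 0 → g₀ w X₀ = 0 → g₀ w w = 0 → w = 0 := by
    intro w h1 h2 h3
    by_contra hw
    have := hpos w hw h1 h2
    rw [h3] at this
    exact lt_irrefl 0 this
  have h3 : ∀ z : V, h (h (h z)) = 0 := by
    intro z
    have := LinearMap.congr_fun hnil z
    simpa using this
  -- h² Y = 0
  have hY2 : h (h Y) = 0 := by
    apply kerlem
    · rw [hsymm (h Y) Y]; exact hlight
    · rw [hsymm (h Y) X₀, hsymm Y (h X₀), hhhX, map_zero]
    · rw [hsymm (h Y) (h (h Y)), h3, map_zero]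
  -- h² = 0
  have hsq : ∀ z : V, h (h z) = 0 := by
    intro z
    apply kerlem
    · rw [hsymm (h z) Y, hsymm z (h Y), hY2, map_zero]
    · rw [hsymm (h z) X₀, hsymm z (h X₀), hhhX, map_zero]
    · rw [hsymm (h z) (h (h z)), h3, map_zero]
  have hort : ∀ u v : V, g₀ (h u) (h v) = 0 := by
    intro u v
    rw [hsymm u (h v), hsq v, map_zero]
  have hzY : ∀ z : V, g₀ (h z) Y = g₀ (h Y) z := by
    intro z; rw [hsymm z Y, hg₀symm, hsymm Y z]
  have hzX : ∀ z : V, g₀ (h z) X₀ = g₀ (h X₀) z := by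
    intro z; rw [hsymm z X₀, hg₀symm, hsymm X₀ z]
  set β : ℝ := g₀ (h X₀) Y with hβ
  have hβne : β ≠ 0 := by
    intro h0
    apply hne
    apply kerlem
    · exact hhYY
    · rw [hzX Y, ← hβ, h0]
    · exact hlight
  refine ⟨hβne, ?_⟩
  intro z
  set F : V := β • h z - g₀ (h X₀) z • h Y - g₀ (h Y) z • h X₀ with hF
  have hFY : g₀ F Y = 0 := by
    simp only [hF, map_sub, map_smul, LinearMap.sub_apply, LinearMap.smul_apply,
      smul_eq_mul]
    rw [hzY z, hhYY, ← hβ]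
    ring
  have hFX : g₀ F X₀ = 0 := by
    simp only [hF, map_sub, map_smul, LinearMap.sub_apply, LinearMap.smul_apply,
      smul_eq_mul]
    rw [hzX z, hzX Y, hhXX, ← hβ]
    ring
  have hFF : g₀ F F = 0 := by
    simp only [hF, map_sub, map_smul, LinearMap.sub_apply, LinearMap.smul_apply,
      smul_eq_mul, hort]
    ring
  have hF0 : F = 0 := kerlem F hFY hFX hFF
  have : β • h z - g₀ (h X₀) z • h Y - g₀ (h Y) z • h X₀ = 0 := by rw [← hF, hF0]
  rw [sub_sub, sub_eq_zero] at this
  exact this
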